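/- arXiv:1903.07225 — 11 statements merged into one kernel-verified Lean document; each statement's English description precedes it below -/
import Mathlib

section
/- If a matrix τ ∈ ℍ₂ satisfies the singular relation ℓ ∈ ℤ⁵ and ℓ ≠ (0,0,0,0,0), then Δ(ℓ) > 0. (The positive definiteness of the imaginary part of τ forces every nontrivial singular relation satisfied by τ to have positive discriminant.) -/
/-!
Write `τ = X + iY` and `σ = dτ + [[-c, b/2], [b/2, -a]]`. Expanding, the relation says that
`-det σ = Δ/4` (real part) and that the mixed determinant of `Re σ` and `Y` vanishes (imaginary
part). Against a definite `Y`, a vanishing mixed determinant forces `det (Re σ) ≤ 0`, with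
equality only for `Re σ = 0`. Hence `Δ/4 = d² det Y - det (Re σ) > 0` unless `ℓ = 0`.
-/

/-- The discriminant of a singular relation `ℓ = (a, b, c, d, e) ∈ ℤ⁵`:
`Δ(ℓ) = b² − 4(ac + de)`. -/
def Delta (l : Fin 5 → ℤ) : ℤ :=
  (l 1) ^ 2 - 4 * ((l 0) * (l 2) + (l 3) * (l 4))

section

variable {p q r y₁ y₂ y₃ : ℝ}

/- `p * y₃ - 2 * q * y₂ + r * y₁` is the mixed determinant of `A = [[p, q], [q, r]]` and
`Y = [[y₁, y₂], [y₂, y₃]]`, the coefficient of `t` in `det (A + t • Y)`. -/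

theorem mul_mul_le_sq_mul_sq_of_mixedDet_eq_zero (h : p * y₃ - 2 * q * y₂ + r * y₁ = 0) :
    p * r * (y₁ * y₃) ≤ q ^ 2 * y₂ ^ 2 := by
  have hsq : 4 * (q ^ 2 * y₂ ^ 2 - p * r * (y₁ * y₃)) = (p * y₃ - r * y₁) ^ 2 := by
    linear_combination (-(2 * q * y₂ + p * y₃ + r * y₁)) * h
  linarith [sq_nonneg (p * y₃ - r * y₁)]

theorem sq_sub_mul_nonneg_of_mixedDet_eq_zero (hY : y₂ ^ 2 < y₁ * y₃)
    (h : p * y₃ - 2 * q * y₂ + r * y₁ = 0) : 0 ≤ q ^ 2 - p * r := by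
  by_contra! hA
  have hpr : 0 < p * r := by nlinarith [sq_nonneg q]
  nlinarith [mul_mul_le_sq_mul_sq_of_mixedDet_eq_zero h, mul_lt_mul_of_pos_left hY hpr,
    mul_le_mul_of_nonneg_right hA.le (sq_nonneg y₂)]

theorem sq_sub_mul_pos_of_mixedDet_eq_zero (hY : y₂ ^ 2 < y₁ * y₃)
    (h : p * y₃ - 2 * q * y₂ + r * y₁ = 0) (hA : ¬(p = 0 ∧ q = 0 ∧ r = 0)) :
    0 < q ^ 2 - p * r := by
  refine (sq_sub_mul_nonneg_of_mixedDet_eq_zero hY h).lt_of_ne fun hdet => hA ?_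
  have hq : q = 0 := by
    have hle := mul_mul_le_sq_mul_sq_of_mixedDet_eq_zero h
    rw [show p * r = q ^ 2 by linarith] at hle
    have : q ^ 2 ≤ 0 := by nlinarith [sub_pos.mpr hY]
    exact pow_eq_zero_iff two_ne_zero |>.mp (le_antisymm this (sq_nonneg q))
  have hy₁ : y₁ ≠ 0 := by rintro rfl; nlinarith [sq_nonneg y₂]
  have hy₃ : y₃ ≠ 0 := by rintro rfl; nlinarith [sq_nonneg y₂]
  subst hq
  rcases mul_eq_zero.mp (show p * r = 0 by linarith) with rfl | rfl
  · exact ⟨rfl, rfl, by simpa [hy₁] using h⟩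
  · exact ⟨by simpa [hy₃] using h, rfl, rfl⟩

end

theorem discr_pos_of_singular_relation {τ₁ τ₂ τ₃ : ℂ} (hY : τ₂.im ^ 2 < τ₁.im * τ₃.im)
    {a b c d e : ℝ}
    (hrel : a * τ₁ + b * τ₂ + c * τ₃ + d * (τ₂ ^ 2 - τ₁ * τ₃) + e = 0)
    (hne : ¬(a = 0 ∧ b = 0 ∧ c = 0 ∧ d = 0 ∧ e = 0)) :
    0 < b ^ 2 - 4 * (a * c + d * e) := by
  obtain ⟨hre, him⟩ := Complex.ext_iff.mp hrel
  simp only [Complex.add_re, Complex.add_im, Complex.mul_re, Complex.mul_im, Complex.sub_re,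
    Complex.sub_im, Complex.ofReal_re, Complex.ofReal_im, Complex.zero_re, Complex.zero_im,
    pow_two] at hre him
  set p := d * τ₁.re - c
  set q := d * τ₂.re + b / 2
  set r := d * τ₃.re - a
  have hpair : p * τ₃.im - 2 * q * τ₂.im + r * τ₁.im = 0 := by linear_combination -him
  have hdiscr : b ^ 2 - 4 * (a * c + d * e)
      = 4 * (d ^ 2 * (τ₁.im * τ₃.im - τ₂.im ^ 2) + (q ^ 2 - p * r)) := by
    linear_combination (-4 * d) * hre
  rw [hdiscr]
  rcases eq_or_ne d 0 with rfl | hd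
  · have hA : ¬(p = 0 ∧ q = 0 ∧ r = 0) := by
      rintro ⟨hp, hq, hr⟩
      simp only [p, q, r, zero_mul, zero_sub, zero_add] at hp hq hr
      obtain ⟨rfl, rfl, rfl⟩ : a = 0 ∧ b = 0 ∧ c = 0 := ⟨by linarith, by linarith, by linarith⟩
      exact hne ⟨rfl, rfl, rfl, rfl, by simpa using hre⟩
    have hA' := sq_sub_mul_pos_of_mixedDet_eq_zero hY hpair hA
    simp only [ne_eq, OfNat.ofNat_ne_zero, not_false_eq_true, zero_pow, zero_mul, zero_add]
    positivity
  · have hA := sq_sub_mul_nonneg_of_mixedDet_eq_zero hY hpair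
    have hdY : 0 < d ^ 2 * (τ₁.im * τ₃.im - τ₂.im ^ 2) := by
      have := sub_pos.mpr hY; positivity
    positivity

theorem stmt1_general (τ : Matrix (Fin 2) (Fin 2) ℂ)
    (hpos : (τ.map Complex.im).PosDef)
    (l : Fin 5 → ℤ) (hl : l ≠ 0)
    (hrel : (l 0 : ℂ) * τ 0 0 + (l 1 : ℂ) * τ 0 1 + (l 2 : ℂ) * τ 1 1
      + (l 3 : ℂ) * ((τ 0 1) ^ 2 - τ 0 0 * τ 1 1) + (l 4 : ℂ) = 0) :
    0 < Delta l := by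
  have hY : (τ 0 1).im ^ 2 < (τ 0 0).im * (τ 1 1).im := by
    have hdet := hpos.det_pos
    have hsymm : (τ 1 0).im = (τ 0 1).im := by simpa using hpos.isHermitian.apply 0 1
    rw [Matrix.det_fin_two] at hdet
    simp only [Matrix.map_apply, hsymm] at hdet
    linarith
  have hne :
      ¬((l 0 : ℝ) = 0 ∧ (l 1 : ℝ) = 0 ∧ (l 2 : ℝ) = 0 ∧ (l 3 : ℝ) = 0 ∧ (l 4 : ℝ) = 0) := by
    refine fun h => hl (funext fun i => ?_)
    fin_cases i <;> simp_all
  have := discr_pos_of_singular_relation hY (by exact_mod_cast hrel) hne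
  unfold Delta
  exact_mod_cast this

/-- If `τ = [[τ₁, τ₂], [τ₂, τ₃]] ∈ ℍ₂` (a symmetric 2×2 complex matrix with positive
definite imaginary part) satisfies a nontrivial singular relation `ℓ ∈ ℤ⁵`, then
`Δ(ℓ) > 0`. -/
theorem stmt1 (τ : Matrix (Fin 2) (Fin 2) ℂ)
    (hsymm : τ.IsSymm)
    (hpos : (τ.map Complex.im).PosDef)
    (l : Fin 5 → ℤ) (hl : l ≠ 0)
    (hrel : (l 0 : ℂ) * τ 0 0 + (l 1 : ℂ) * τ 0 1 + (l 2 : ℂ) * τ 1 1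
      + (l 3 : ℂ) * ((τ 0 1) ^ 2 - τ 0 0 * τ 1 1) + (l 4 : ℂ) = 0) :
    0 < Delta l :=
  stmt1_general τ hpos l hl hrel
end

section
/- Let D₀ be a positive squarefree integer and Q(x, y) = Ax² + Bxy + Cy² an integral binary quadratic form with A > 0 and discriminant B² − 4AC = −16D₀, such that every integer represented by Q (i.e., every value Q(x, y) with x, y ∈ ℤ) is congruent to 0 or 1 modulo 4. Then either gcd(A, B, C) = 1 (Q is primitive), or else 4 divides each of A, B, C (so Q = 4Q′ for an integral form Q′ of discriminant −D₀) and in this case necessarily D₀ ≡ 3 (mod 4). -/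
/-! A common prime factor `p` of `A, B, C` gives `p² ∣ 16 D₀`, so squarefreeness forces `p = 2`.
With `A, B, C` even, the values `Q(1,0) = A`, `Q(0,1) = C`, `Q(1,1) = A + B + C` are even, hence
divisible by `4` since they are `0` or `1` mod `4`; this gives `4 ∣ A, B, C`. Then `Q = 4Q'` with
`disc Q' = -D₀`, and a discriminant is `0` or `1` mod `4`; squarefreeness rules out `D₀ ≡ 0`. -/

namespace Int

theorem exists_prime_dvd_of_gcd_gcd_ne_one {A B C : ℤ} (h : Int.gcd A (Int.gcd B C) ≠ 1) :
    ∃ p : ℕ, p.Prime ∧ (p : ℤ) ∣ A ∧ (p : ℤ) ∣ B ∧ (p : ℤ) ∣ C := by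
  obtain ⟨p, hp, hpd⟩ := Nat.exists_prime_and_dvd h
  have hpg : (p : ℤ) ∣ (Int.gcd A (Int.gcd B C) : ℤ) := Int.natCast_dvd_natCast.mpr hpd
  have hpBC : (p : ℤ) ∣ (Int.gcd B C : ℤ) := hpg.trans (Int.gcd_dvd_right ..)
  exact ⟨p, hp, hpg.trans (Int.gcd_dvd_left ..), hpBC.trans (Int.gcd_dvd_left ..),
    hpBC.trans (Int.gcd_dvd_right ..)⟩

theorem sq_dvd_discr_of_dvd {p A B C : ℤ} (hA : p ∣ A) (hB : p ∣ B) (hC : p ∣ C) :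
    p ^ 2 ∣ B ^ 2 - 4 * A * C := by
  obtain ⟨a, rfl⟩ := hA
  obtain ⟨b, rfl⟩ := hB
  obtain ⟨c, rfl⟩ := hC
  exact ⟨b ^ 2 - 4 * a * c, by ring⟩

theorem prime_eq_two_of_sq_dvd_sixteen_mul {p : ℕ} (hp : p.Prime) {D : ℤ} (hD : Squarefree D)
    (h : (p : ℤ) ^ 2 ∣ 16 * D) : p = 2 := by
  by_contra hp2
  have hcop : IsCoprime ((p : ℤ) ^ 2) (2 ^ 4) :=
    (Nat.isCoprime_iff_coprime.mpr ((Nat.coprime_primes hp Nat.prime_two).mpr hp2)).pow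
  have hunit := hD (p : ℤ) (by rw [← sq]; exact hcop.dvd_of_dvd_mul_left (by simpa using h))
  rw [Int.isUnit_iff] at hunit
  have := hp.two_le
  omega

theorem emod_four_eq_three_of_discr_eq_neg {a b c D : ℤ} (hD : Squarefree D)
    (hdisc : b ^ 2 - 4 * a * c = -D) : D % 4 = 3 := by
  rcases Int.even_or_odd b with ⟨k, rfl⟩ | ⟨k, rfl⟩
  · have hunit := hD 2 ⟨a * c - k ^ 2, by linear_combination hdisc⟩
    rw [Int.isUnit_iff] at hunit
    omega
  · have hD_eq : D = 4 * (a * c - k ^ 2 - k) - 1 := by linear_combination hdisc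
    omega

end Int

theorem four_dvd_coeffs_of_two_dvd {A B C : ℤ} (hA : 2 ∣ A) (hB : 2 ∣ B) (hC : 2 ∣ C)
    (hrep : ∀ x y : ℤ,
      (A * x ^ 2 + B * x * y + C * y ^ 2) % 4 = 0 ∨
      (A * x ^ 2 + B * x * y + C * y ^ 2) % 4 = 1) :
    4 ∣ A ∧ 4 ∣ B ∧ 4 ∣ C := by
  have h10 := hrep 1 0
  have h01 := hrep 0 1
  have h11 := hrep 1 1
  simp only [one_pow, zero_pow two_ne_zero, mul_one, mul_zero, add_zero, zero_add] at h10 h01 h11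
  omega

theorem stmt2_general (D₀ : ℤ) (hD₀sf : Squarefree D₀)
    (A B C : ℤ) (hdisc : B ^ 2 - 4 * A * C = -16 * D₀)
    (hrep : ∀ x y : ℤ,
      (A * x ^ 2 + B * x * y + C * y ^ 2) % 4 = 0 ∨
      (A * x ^ 2 + B * x * y + C * y ^ 2) % 4 = 1) :
    Int.gcd A (Int.gcd B C) = 1 ∨
    ((4 ∣ A ∧ 4 ∣ B ∧ 4 ∣ C) ∧ D₀ % 4 = 3) := by
  by_cases hg : Int.gcd A (Int.gcd B C) = 1
  · exact Or.inl hg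
  right
  obtain ⟨p, hp, hpA, hpB, hpC⟩ := Int.exists_prime_dvd_of_gcd_gcd_ne_one hg
  have hp16 : (p : ℤ) ^ 2 ∣ 16 * D₀ := by
    simpa [hdisc] using Int.sq_dvd_discr_of_dvd hpA hpB hpC
  obtain rfl := Int.prime_eq_two_of_sq_dvd_sixteen_mul hp hD₀sf hp16
  obtain ⟨⟨a, rfl⟩, ⟨b, rfl⟩, ⟨c, rfl⟩⟩ := four_dvd_coeffs_of_two_dvd
    (by exact_mod_cast hpA) (by exact_mod_cast hpB) (by exact_mod_cast hpC) hrep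
  refine ⟨⟨dvd_mul_right 4 a, dvd_mul_right 4 b, dvd_mul_right 4 c⟩, ?_⟩
  have hdisc' : (16 : ℤ) * (b ^ 2 - 4 * a * c) = 16 * -D₀ := by linear_combination hdisc
  exact Int.emod_four_eq_three_of_discr_eq_neg hD₀sf (mul_left_cancel₀ (by norm_num) hdisc')

/-- Let `D₀` be a positive squarefree integer and `Q(x,y) = Ax² + Bxy + Cy²` an integral
binary quadratic form with `A > 0` and discriminant `B² − 4AC = −16D₀`, such that every
integer represented by `Q` is congruent to `0` or `1` modulo `4`.  Then either `Q` is
primitive (`gcd(A, B, C) = 1`), or else `4` divides each of `A`, `B`, `C` (so `Q = 4Q′`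
for an integral form `Q′` of discriminant `−D₀`) and in this case `D₀ ≡ 3 (mod 4)`. -/
theorem stmt2 (D₀ : ℤ) (hD₀pos : 0 < D₀) (hD₀sf : Squarefree D₀)
    (A B C : ℤ) (hA : 0 < A) (hdisc : B ^ 2 - 4 * A * C = -16 * D₀)
    (hrep : ∀ x y : ℤ,
      (A * x ^ 2 + B * x * y + C * y ^ 2) % 4 = 0 ∨
      (A * x ^ 2 + B * x * y + C * y ^ 2) % 4 = 1) :
    Int.gcd A (Int.gcd B C) = 1 ∨
    ((4 ∣ A ∧ 4 ∣ B ∧ 4 ∣ C) ∧ D₀ % 4 = 3) :=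
  stmt2_general D₀ hD₀sf A B C hdisc hrep
end

section
/- The ℤ-submodule 𝒪 = ℤe₁ + ℤe₂ + ℤe₃ + ℤe₄ of B contains 1 and is closed under multiplication (i.e., the product of any two elements of 𝒪 lies in 𝒪), and e₁, e₂, e₃, e₄ are linearly independent over ℚ; hence 𝒪 is an order of B. -/
open Quaternion

/-! The ℤ-span of a set of generators is closed under multiplication as soon as the products of
two generators lie in it, so everything reduces to the multiplication table of `e₂, e₃, e₄`.
Writing `p = 4m + 1` and `s = 2k`, the table has integral coefficients: `p ≡ 1 (mod 4)` gives
`e₂² = e₂ + m`, and `pt = s²DN + 1` gives `e₄² = DN·t`. -/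

open Pointwise in
theorem Submodule.mul_mem_span_of_mul_mem {R A : Type*} [CommSemiring R] [Semiring A] [Algebra R A]
    {s : Set A} (hs : ∀ a ∈ s, ∀ b ∈ s, a * b ∈ span R s) {x y : A}
    (hx : x ∈ span R s) (hy : y ∈ span R s) : x * y ∈ span R s :=
  span_le.mpr (Set.mul_subset_iff.mpr hs) (span_mul_span R s s ▸ mul_mem_mul hx hy)

namespace QuaternionAlgebra.IntOrder

attribute [local simp] re_ofNat imI_ofNat imJ_ofNat imK_ofNat

variable {a b σ : ℚ} {n m k t : ℤ}

/-- `(1 + J) / 2` -/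
def e₂ : ℍ[ℚ, a, b] := ⟨1 / 2, 0, 1 / 2, 0⟩

/-- `(I + IJ) / 2` -/
def e₃ : ℍ[ℚ, a, b] := ⟨0, 1 / 2, 0, 1 / 2⟩

/-- `(σJ + IJ) / b` -/
def e₄ (σ : ℚ) : ℍ[ℚ, a, b] := ⟨0, 0, σ / b, 1 / b⟩

def generators (σ : ℚ) : Set ℍ[ℚ, a, b] := {1, e₂, e₃, e₄ σ}

theorem ne_zero_of_eq_four_mul_add_one (hb : b = 4 * m + 1) : b ≠ 0 := by
  rw [hb]
  exact_mod_cast (by omega : 4 * m + 1 ≠ 0)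

theorem linearIndependent_generators (hb : b ≠ 0) :
    LinearIndependent ℚ ![(1 : ℍ[ℚ, a, b]), e₂, e₃, e₄ σ] := by
  rw [Fintype.linearIndependent_iff]
  intro c hc
  simp only [Fin.sum_univ_four, Matrix.cons_val_zero, Matrix.cons_val_one, Matrix.cons_val_two,
    Matrix.cons_val_three] at hc
  have h₂ : c 2 = 0 := by simpa [e₂, e₃, e₄] using congrArg imI hc
  have h₃ : c 3 = 0 := by simpa [e₂, e₃, e₄, h₂, hb] using congrArg imK hc
  have h₁ : c 1 = 0 := by simpa [e₂, e₃, e₄, h₃] using congrArg imJ hc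
  have h₀ : c 0 = 0 := by simpa [e₂, e₃, e₄, h₁] using congrArg re hc
  intro i
  fin_cases i <;> assumption

theorem e₂_mul_e₂ (hb : b = 4 * m + 1) : (e₂ * e₂ : ℍ[ℚ, a, b]) = m • 1 + e₂ := by
  ext <;> simp [e₂, hb] <;> ring

theorem e₃_mul_e₃ (ha : a = -n) (hb : b = 4 * m + 1) :
    (e₃ * e₃ : ℍ[ℚ, a, b]) = (n * m) • 1 := by
  ext <;> simp [e₃, ha, hb]
  ring

theorem e₂_mul_e₃ (ha : a = -n) (hb : b = 4 * m + 1) (hσ : σ = 2 * k * n) :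
    (e₂ * e₃ : ℍ[ℚ, a, b]) =
      (2 * k * n * m) • 1 - (4 * k * n * m) • e₂ - (2 * m) • e₃ + ((4 * m + 1) * m) • e₄ σ := by
  have hb₀ := ne_zero_of_eq_four_mul_add_one hb
  ext <;> simp [e₂, e₃, e₄, ha, hσ] <;> field_simp <;> (subst hb; ring)

theorem e₃_mul_e₂ (ha : a = -n) (hb : b = 4 * m + 1) (hσ : σ = 2 * k * n) :
    (e₃ * e₂ : ℍ[ℚ, a, b]) =
      (4 * k * n * m) • e₂ - (2 * k * n * m) • 1 + (2 * m + 1) • e₃ - ((4 * m + 1) * m) • e₄ σ := by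
  have hb₀ := ne_zero_of_eq_four_mul_add_one hb
  ext <;> simp [e₂, e₃, e₄, ha, hσ] <;> field_simp <;> (subst hb; ring)

theorem e₂_mul_e₄ (ha : a = -n) (hb : b = 4 * m + 1) (hσ : σ = 2 * k * n) :
    (e₂ * e₄ σ : ℍ[ℚ, a, b]) = (2 * k * n) • 1 - (2 * k * n) • e₂ - e₃ + (2 * m + 1) • e₄ σ := by
  have hb₀ := ne_zero_of_eq_four_mul_add_one hb
  ext <;> simp [e₂, e₃, e₄, ha, hσ] <;> field_simp <;> (subst hb; ring)

theorem e₄_mul_e₂ (ha : a = -n) (hb : b = 4 * m + 1) (hσ : σ = 2 * k * n) :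
    (e₄ σ * e₂ : ℍ[ℚ, a, b]) = (2 * k * n) • e₂ + e₃ - (2 * m) • e₄ σ := by
  have hb₀ := ne_zero_of_eq_four_mul_add_one hb
  ext <;> simp [e₂, e₃, e₄, ha, hσ] <;> field_simp <;> (subst hb; ring)

theorem e₃_mul_e₄ (ha : a = -n) (hb : b = 4 * m + 1) (hσ : σ = 2 * k * n)
    (ht : b * t = (2 * k) ^ 2 * n + 1) :
    (e₃ * e₄ σ : ℍ[ℚ, a, b]) =
      (n - 2 * n * t * m) • 1 + (n * (4 * k ^ 2 * n - t)) • e₂ + (2 * k * n) • e₃ -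
        (4 * k * n * m) • e₄ σ := by
  have hb₀ := ne_zero_of_eq_four_mul_add_one hb
  rw [mul_comm, ← eq_div_iff hb₀] at ht
  ext <;> simp [e₂, e₃, e₄, ha, hσ, ht] <;> field_simp <;> (subst hb; ring)

theorem e₄_mul_e₃ (ha : a = -n) (hb : b = 4 * m + 1) (hσ : σ = 2 * k * n)
    (ht : b * t = (2 * k) ^ 2 * n + 1) :
    (e₄ σ * e₃ : ℍ[ℚ, a, b]) =
      (2 * n * t * m) • 1 + (n * (t - 4 * k ^ 2 * n)) • e₂ - (2 * k * n) • e₃ +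
        (4 * k * n * m) • e₄ σ := by
  have hb₀ := ne_zero_of_eq_four_mul_add_one hb
  rw [mul_comm, ← eq_div_iff hb₀] at ht
  ext <;> simp [e₂, e₃, e₄, ha, hσ, ht] <;> field_simp <;> (subst hb; ring)

theorem e₄_mul_e₄ (ha : a = -n) (hb : b = 4 * m + 1) (hσ : σ = 2 * k * n)
    (ht : b * t = (2 * k) ^ 2 * n + 1) : (e₄ σ * e₄ σ : ℍ[ℚ, a, b]) = (n * t) • 1 := by
  have hb₀ := ne_zero_of_eq_four_mul_add_one hb
  rw [mul_comm, ← eq_div_iff hb₀] at ht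
  ext <;> simp [e₄, ha, hσ, ht] <;> field_simp
  subst hb
  ring

theorem mul_mem_span_generators (ha : a = -n) (hb : b = 4 * m + 1) (hσ : σ = 2 * k * n)
    (ht : b * t = (2 * k) ^ 2 * n + 1) :
    ∀ x ∈ (generators σ : Set ℍ[ℚ, a, b]), ∀ y ∈ generators σ,
      x * y ∈ Submodule.span ℤ (generators σ) := by
  set S := Submodule.span ℤ (generators σ : Set ℍ[ℚ, a, b])
  have h₁ : 1 ∈ S := Submodule.subset_span (by simp [generators])
  have h₂ : e₂ ∈ S := Submodule.subset_span (by simp [generators])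
  have h₃ : e₃ ∈ S := Submodule.subset_span (by simp [generators])
  have h₄ : e₄ σ ∈ S := Submodule.subset_span (by simp [generators])
  rintro x (rfl | rfl | rfl | rfl) y (rfl | rfl | rfl | rfl)
  all_goals
    simp only [one_mul, mul_one, e₂_mul_e₂ hb, e₃_mul_e₃ ha hb, e₂_mul_e₃ ha hb hσ,
      e₃_mul_e₂ ha hb hσ, e₂_mul_e₄ ha hb hσ, e₄_mul_e₂ ha hb hσ, e₃_mul_e₄ ha hb hσ ht,
      e₄_mul_e₃ ha hb hσ ht, e₄_mul_e₄ ha hb hσ ht]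
    apply_rules [add_mem, sub_mem, zsmul_mem]

end QuaternionAlgebra.IntOrder

theorem stmt3_general (D N p : ℕ)
    (hp4 : p % 4 = 1)
    (s t : ℤ) (hs : Even s) (ht : (p : ℤ) * t = s ^ 2 * D * N + 1)
    (e₁ e₂ e₃ e₄ : ℍ[ℚ, -((D:ℚ)*N), (p:ℚ)])
    (he₁ : e₁ = 1)
    (he₂ : e₂ = ⟨1/2, 0, 1/2, 0⟩)
    (he₃ : e₃ = ⟨0, 1/2, 0, 1/2⟩)
    (he₄ : e₄ = ⟨0, 0, (s:ℚ)*D*N/p, 1/p⟩) :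
    (1 : ℍ[ℚ, -((D:ℚ)*N), (p:ℚ)]) ∈ Submodule.span ℤ ({e₁, e₂, e₃, e₄} : Set _) ∧
    (∀ x ∈ Submodule.span ℤ ({e₁, e₂, e₃, e₄} : Set _),
      ∀ y ∈ Submodule.span ℤ ({e₁, e₂, e₃, e₄} : Set _),
        x * y ∈ Submodule.span ℤ ({e₁, e₂, e₃, e₄} : Set _)) ∧
    LinearIndependent ℚ ![e₁, e₂, e₃, e₄] := by
  obtain ⟨k, rfl⟩ := hs
  subst he₁ he₂ he₃ he₄
  have ha : -((D : ℚ) * N) = -((D * N : ℤ) : ℚ) := by push_cast; rfl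
  have hb : (p : ℚ) = 4 * ((p / 4 : ℕ) : ℤ) + 1 := by
    have := Nat.div_add_mod p 4
    rw [hp4] at this
    exact_mod_cast this.symm
  have hσ : ((k + k : ℤ) : ℚ) * D * N = 2 * k * ((D * N : ℤ) : ℚ) := by push_cast; ring
  have hpt : (p : ℚ) * t = (2 * k) ^ 2 * ((D * N : ℤ) : ℚ) + 1 := by
    exact_mod_cast (by linear_combination ht : (p : ℤ) * t = (2 * k) ^ 2 * (D * N) + 1)
  open QuaternionAlgebra.IntOrder in
  exact ⟨Submodule.subset_span (by simp),
    fun x hx y hy => Submodule.mul_mem_span_of_mul_mem (mul_mem_span_generators ha hb hσ hpt) hx hy,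
    linearIndependent_generators (ne_zero_of_eq_four_mul_add_one hb)⟩

/-- Let `B = (−DN, p / ℚ)` be the quaternion algebra with `I² = −DN`, `J² = p`, `IJ = −JI`,
where `p ≡ 1 (mod 4)` is a prime with `p ∤ 2DN`, `s` is an even integer with
`s²DN + 1 ≡ 0 (mod p)`, and `t = (s²DN + 1)/p ∈ ℤ`.  With
`e₁ = 1`, `e₂ = (1 + J)/2`, `e₃ = (I + IJ)/2`, `e₄ = (sDN·J + IJ)/p`, the ℤ-submodule
`𝒪 = ℤe₁ + ℤe₂ + ℤe₃ + ℤe₄` of `B` contains `1`, is closed under multiplication, and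
`e₁, e₂, e₃, e₄` are linearly independent over `ℚ`; hence `𝒪` is an order of `B`. -/
theorem stmt3 (D N p : ℕ) (hD : 0 < D) (hN : 0 < N)
    (hp : p.Prime) (hp4 : p % 4 = 1) (hpDN : ¬ (p ∣ 2 * D * N))
    (s t : ℤ) (hs : Even s) (ht : (p : ℤ) * t = s ^ 2 * D * N + 1)
    (e₁ e₂ e₃ e₄ : ℍ[ℚ, -((D:ℚ)*N), (p:ℚ)])
    (he₁ : e₁ = 1)
    (he₂ : e₂ = ⟨1/2, 0, 1/2, 0⟩)
    (he₃ : e₃ = ⟨0, 1/2, 0, 1/2⟩)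
    (he₄ : e₄ = ⟨0, 0, (s:ℚ)*D*N/p, 1/p⟩) :
    (1 : ℍ[ℚ, -((D:ℚ)*N), (p:ℚ)]) ∈ Submodule.span ℤ ({e₁, e₂, e₃, e₄} : Set _) ∧
    (∀ x ∈ Submodule.span ℤ ({e₁, e₂, e₃, e₄} : Set _),
      ∀ y ∈ Submodule.span ℤ ({e₁, e₂, e₃, e₄} : Set _),
        x * y ∈ Submodule.span ℤ ({e₁, e₂, e₃, e₄} : Set _)) ∧
    LinearIndependent ℚ ![e₁, e₂, e₃, e₄] :=
  stmt3_general D N p hp4 s t hs ht e₁ e₂ e₃ e₄ he₁ he₂ he₃ he₄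
end

section
/- Let 𝒪 = ℤe₁ + ℤe₂ + ℤe₃ + ℤe₄ ⊂ B. With μ = I, the set μ^⊥ = {β ∈ 𝒪 : tr(β·μ̄) = 0} equals ℤ·1 + ℤe₂ + ℤe₄, and for all integers x, y one has tr(xe₂ + ye₄)² − 4·nr(xe₂ + ye₄) = p x² + 4sDN xy + 4tDN y². In particular the quadratic form Q_μ(x, y) = disc(xe₂ + ye₄) equals px² + 4sDNxy + 4tDNy². -/
/-!
Since `tr(β Ī) = 2DN · imI β`, the set `μ^⊥` is `𝒪` cut by the kernel of the `ℤ`-linear map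
`imI`. Of the generators of `𝒪` only `e₃` has a nonzero `I`-coordinate, and `imI e₃ = 1/2` is
not torsion, so the cut simply removes `e₃` from the generating set. The discriminant is
`tr² − 4 nr = 4(p z² + DNp w² − DN y²)`; on `x e₂ + y e₄` this becomes the stated form once
`s²DN + 1` is replaced by `pt`.
-/

open Quaternion

/-- The reduced trace `tr(α) = α + ᾱ = 2·re(α)` on `B = (−DN, p / ℚ)`. -/
def qtr {a b : ℚ} (α : ℍ[ℚ, a, b]) : ℚ := 2 * α.re

/-- The reduced norm `nr(α) = αᾱ = x² + DNy² − pz² − DNpw²` on `B = (−DN, p / ℚ)`,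
for `α = x + yI + zJ + wIJ`. -/
def qnr (D N p : ℕ) (α : ℍ[ℚ, -((D:ℚ)*N), (p:ℚ)]) : ℚ :=
  α.re ^ 2 + (D:ℚ) * N * α.imI ^ 2 - (p:ℚ) * α.imJ ^ 2 - (D:ℚ) * N * p * α.imK ^ 2

theorem Submodule.span_insert_inf_ker {R M N : Type*} [Ring R] [AddCommGroup M] [Module R M]
    [AddCommGroup N] [Module R N] (f : M →ₗ[R] N) {x : M} {s : Set M}
    (hx : Function.Injective fun c : R ↦ c • f x) (hs : s ⊆ LinearMap.ker f) :
    span R (insert x s) ⊓ LinearMap.ker f = span R s := by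
  refine le_antisymm ?_ (le_inf (span_mono (Set.subset_insert x s)) (span_le.mpr hs))
  rintro y ⟨hy, hfy⟩
  obtain ⟨c, z, hz, rfl⟩ := mem_span_insert.mp hy
  have hfz : f z = 0 := span_le.mpr hs hz
  have hc : c = 0 := hx (by simpa [hfz] using hfy)
  simpa [hc] using hz

theorem qtr_mul_star_I {a b : ℚ} (β : ℍ[ℚ, a, b]) :
    qtr (β * star ⟨0, 1, 0, 0⟩) = -2 * a * β.imI := by
  simp [qtr, QuaternionAlgebra.re_mul]
  ring

theorem qtr_sq_sub_four_mul_qnr (D N p : ℕ) (α : ℍ[ℚ, -((D:ℚ)*N), (p:ℚ)]) :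
    qtr α ^ 2 - 4 * qnr D N p α
      = 4 * (p * α.imJ ^ 2 + D * N * p * α.imK ^ 2 - D * N * α.imI ^ 2) := by
  simp only [qtr, qnr]
  ring

theorem stmt4_general (D N p : ℕ) (hD : 0 < D) (hN : 0 < N)
    (hp : p.Prime)
    (s t : ℤ) (ht : (p : ℤ) * t = s ^ 2 * D * N + 1)
    (e₁ e₂ e₃ e₄ μ : ℍ[ℚ, -((D:ℚ)*N), (p:ℚ)])
    (he₁ : e₁ = 1)
    (he₂ : e₂ = ⟨1/2, 0, 1/2, 0⟩)
    (he₃ : e₃ = ⟨0, 1/2, 0, 1/2⟩)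
    (he₄ : e₄ = ⟨0, 0, (s:ℚ)*D*N/p, 1/p⟩)
    (hμ : μ = ⟨0, 1, 0, 0⟩) :
    {β : ℍ[ℚ, -((D:ℚ)*N), (p:ℚ)] |
        β ∈ Submodule.span ℤ ({e₁, e₂, e₃, e₄} : Set _) ∧ qtr (β * star μ) = 0}
      = (Submodule.span ℤ ({1, e₂, e₄} : Set (ℍ[ℚ, -((D:ℚ)*N), (p:ℚ)])) : Set _) ∧
    ∀ x y : ℤ, qtr (x • e₂ + y • e₄) ^ 2 - 4 * qnr D N p (x • e₂ + y • e₄)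
      = (p:ℚ) * x ^ 2 + 4 * s * D * N * (x * y) + 4 * t * D * N * y ^ 2 := by
  have hp0 : (p:ℚ) ≠ 0 := by exact_mod_cast hp.ne_zero
  subst he₁ hμ
  constructor
  · set imI := (QuaternionAlgebra.imIₗ (-((D:ℚ)*N)) 0 p).restrictScalars ℤ
    have horth : ∀ β, qtr (β * star ⟨0, 1, 0, 0⟩) = 0 ↔ β ∈ LinearMap.ker imI := by
      intro β
      have hDN : (D:ℚ) * N ≠ 0 := by positivity
      rw [qtr_mul_star_I]
      simp [hDN, imI]
    have hinj : Function.Injective fun c : ℤ ↦ c • imI e₃ :=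
      smul_left_injective ℤ (by simp [imI, he₃])
    have hker : {1, e₂, e₄} ⊆ (LinearMap.ker imI : Set _) := by
      simp [Set.insert_subset_iff, imI, he₂, he₄]
    rw [Set.insert_comm e₂ e₃, Set.insert_comm 1 e₃,
      ← Submodule.span_insert_inf_ker imI hinj hker]
    ext β
    simp only [Set.mem_ofPred_eq, SetLike.mem_coe, Submodule.mem_inf, horth]
  · intro x y
    have ht' : (p:ℚ) * t = s ^ 2 * D * N + 1 := by exact_mod_cast ht
    rw [qtr_sq_sub_four_mul_qnr]
    simp [he₂, he₄, zsmul_eq_mul]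
    field_simp
    linear_combination (-16 * (y:ℚ)^2 * D * N) * ht'

/-- In the primitive case (`p ≡ 1 (mod 4)` prime, `p ∤ 2DN`, `s` even,
`pt = s²DN + 1`), with `𝒪 = ℤe₁ + ℤe₂ + ℤe₃ + ℤe₄` and `μ = I`, the set
`μ^⊥ = {β ∈ 𝒪 : tr(βμ̄) = 0}` equals `ℤ·1 + ℤe₂ + ℤe₄`, and for all integers `x, y` one has
`tr(xe₂ + ye₄)² − 4·nr(xe₂ + ye₄) = px² + 4sDNxy + 4tDNy²`; in particular the quadratic
form `Q_μ(x, y) = disc(xe₂ + ye₄)` equals `px² + 4sDNxy + 4tDNy²`. -/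
theorem stmt4 (D N p : ℕ) (hD : 0 < D) (hN : 0 < N)
    (hp : p.Prime) (hp4 : p % 4 = 1) (hpDN : ¬ (p ∣ 2 * D * N))
    (s t : ℤ) (hs : Even s) (ht : (p : ℤ) * t = s ^ 2 * D * N + 1)
    (e₁ e₂ e₃ e₄ μ : ℍ[ℚ, -((D:ℚ)*N), (p:ℚ)])
    (he₁ : e₁ = 1)
    (he₂ : e₂ = ⟨1/2, 0, 1/2, 0⟩)
    (he₃ : e₃ = ⟨0, 1/2, 0, 1/2⟩)
    (he₄ : e₄ = ⟨0, 0, (s:ℚ)*D*N/p, 1/p⟩)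
    (hμ : μ = ⟨0, 1, 0, 0⟩) :
    {β : ℍ[ℚ, -((D:ℚ)*N), (p:ℚ)] |
        β ∈ Submodule.span ℤ ({e₁, e₂, e₃, e₄} : Set _) ∧ qtr (β * star μ) = 0}
      = (Submodule.span ℤ ({1, e₂, e₄} : Set (ℍ[ℚ, -((D:ℚ)*N), (p:ℚ)])) : Set _) ∧
    ∀ x y : ℤ, qtr (x • e₂ + y • e₄) ^ 2 - 4 * qnr D N p (x • e₂ + y • e₄)
      = (p:ℚ) * x ^ 2 + 4 * s * D * N * (x * y) + 4 * t * D * N * y ^ 2 :=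
  stmt4_general D N p hD hN hp s t ht e₁ e₂ e₃ e₄ μ he₁ he₂ he₃ he₄ hμ
end

section
/- The ℤ-submodule 𝒪 = ℤe₁ + ℤe₂ + ℤe₃ + ℤe₄ of B contains 1 and is closed under multiplication (i.e., the product of any two elements of 𝒪 lies in 𝒪), and e₁, e₂, e₃, e₄ are linearly independent over ℚ; hence 𝒪 is an order of B. -/
/-!
Write `ω = (1 + i)/2` and `sDN = 2u + 1` (this is odd because `s²DN = 4pt - 1`). Then
`e₂ = ω`, `e₃ = j` and `e₄ = (u + ω) j / p`. Since `i² = -DN ≡ 1 (mod 4)`, `ω` is integral: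
`ω² = ω - (1 + DN)/4`, and `j ω = (1 - ω) j`. Every product of two of the `eᵢ` therefore
reduces to an integral combination, the only division by `p` coming from
`(u + ω)(u + 1 - ω) = u² + u + (1 + DN)/4 = p · DN t`.
-/

open Quaternion Submodule

theorem Submodule.mul_mem_span_of_mul_mem_span {R A : Type*} [CommSemiring R] [Semiring A]
    [Algebra R A] {S : Set A} (hS : ∀ x ∈ S, ∀ y ∈ S, x * y ∈ span R S) {x y : A}
    (hx : x ∈ span R S) (hy : y ∈ span R S) : x * y ∈ span R S := by
  have hle : span R S * span R S ≤ span R S := by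
    rw [span_mul_span, span_le]
    exact Set.mul_subset_iff.mpr hS
  exact hle (mul_mem_mul hx hy)

namespace QuaternionAlgebra

def orderBasis (a b : ℚ) (u p : ℤ) : Fin 4 → ℍ[ℚ,a,b] :=
  ![1, ⟨1 / 2, 1 / 2, 0, 0⟩, ⟨0, 0, 1, 0⟩, ⟨0, 0, (2 * u + 1) / (2 * p), 1 / (2 * p)⟩]

/-- Entry `i j k` is the `k`-th coordinate of `orderBasis i * orderBasis j` when
`a = 1 + 4 (u² + u - p m)` and `b = p`. -/
def orderBasisStructConst (u m p : ℤ) : Fin 4 → Fin 4 → Fin 4 → ℤ :=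
  ![![![1, 0, 0, 0], ![0, 1, 0, 0], ![0, 0, 1, 0], ![0, 0, 0, 1]],
    ![![0, 1, 0, 0], ![u ^ 2 + u - p * m, 1, 0, 0], ![0, 0, -u, p], ![0, 0, -m, u + 1]],
    ![![0, 0, 1, 0], ![0, 0, u + 1, -p], ![p, 0, 0, 0], ![u + 1, -1, 0, 0]],
    ![![0, 0, 0, 1], ![0, 0, m, -u], ![u, 1, 0, 0], ![m, 0, 0, 0]]]

variable {a b : ℚ} {u p : ℤ}

theorem sum_smul_orderBasis (g : Fin 4 → ℚ) :
    ∑ k, g k • orderBasis a b u p k =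
      ⟨g 0 + g 1 / 2, g 1 / 2, g 2 + g 3 * (2 * u + 1) / (2 * p), g 3 / (2 * p)⟩ := by
  ext <;> simp [Fin.sum_univ_four, orderBasis] <;> ring

theorem linearIndependent_orderBasis (hp : p ≠ 0) : LinearIndependent ℚ (orderBasis a b u p) := by
  have hp' : (p : ℚ) ≠ 0 := by exact_mod_cast hp
  refine Fintype.linearIndependent_iff.mpr fun g hg => ?_
  rw [sum_smul_orderBasis] at hg
  obtain ⟨h0, h1, h2, h3⟩ := QuaternionAlgebra.ext_iff.mp hg
  simp only [re_zero, imI_zero, imJ_zero, imK_zero] at h0 h1 h2 h3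
  have g3 : g 3 = 0 := by simpa [hp'] using h3
  have g1 : g 1 = 0 := by simpa using h1
  intro k
  fin_cases k
  · simpa [g1] using h0
  · exact g1
  · simpa [g3] using h2
  · exact g3

theorem orderBasis_mul_orderBasis {m : ℤ} (hp : p ≠ 0) (ha : a = 1 + 4 * (u ^ 2 + u - p * m))
    (hb : b = p) (i j : Fin 4) :
    orderBasis a b u p i * orderBasis a b u p j =
      ∑ k, orderBasisStructConst u m p i j k • orderBasis a b u p k := by
  subst ha hb
  have hp' : (p : ℚ) ≠ 0 := by exact_mod_cast hp
  simp_rw [← Int.cast_smul_eq_zsmul ℚ, sum_smul_orderBasis]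
  fin_cases i <;> fin_cases j <;>
    ext <;> simp [orderBasis, orderBasisStructConst, field] <;> ring

theorem mul_mem_span_range_orderBasis {m : ℤ} (hp : p ≠ 0) (ha : a = 1 + 4 * (u ^ 2 + u - p * m))
    (hb : b = p) {x y : ℍ[ℚ,a,b]} (hx : x ∈ span ℤ (Set.range (orderBasis a b u p)))
    (hy : y ∈ span ℤ (Set.range (orderBasis a b u p))) :
    x * y ∈ span ℤ (Set.range (orderBasis a b u p)) := by
  refine mul_mem_span_of_mul_mem_span ?_ hx hy
  rintro _ ⟨i, rfl⟩ _ ⟨j, rfl⟩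
  rw [orderBasis_mul_orderBasis hp ha hb i j]
  exact (mem_span_range_iff_exists_fun ℤ).mpr ⟨_, rfl⟩

end QuaternionAlgebra

open QuaternionAlgebra

theorem stmt5_general (D N p : ℕ) (hp : p.Prime)
    (s t : ℤ) (ht : 4 * (p : ℤ) * t = s ^ 2 * D * N + 1)
    (e₁ e₂ e₃ e₄ : ℍ[ℚ, -((D:ℚ)*N), (p:ℚ)])
    (he₁ : e₁ = 1)
    (he₂ : e₂ = ⟨1/2, 1/2, 0, 0⟩)
    (he₃ : e₃ = ⟨0, 0, 1, 0⟩)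
    (he₄ : e₄ = ⟨0, 0, (s:ℚ)*D*N/(2*p), 1/(2*p)⟩) :
    (1 : ℍ[ℚ, -((D:ℚ)*N), (p:ℚ)]) ∈ Submodule.span ℤ ({e₁, e₂, e₃, e₄} : Set _) ∧
    (∀ x ∈ Submodule.span ℤ ({e₁, e₂, e₃, e₄} : Set _),
      ∀ y ∈ Submodule.span ℤ ({e₁, e₂, e₃, e₄} : Set _),
        x * y ∈ Submodule.span ℤ ({e₁, e₂, e₃, e₄} : Set _)) ∧
    LinearIndependent ℚ ![e₁, e₂, e₃, e₄] := by
  have hp0 : (p : ℤ) ≠ 0 := by exact_mod_cast hp.ne_zero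
  obtain ⟨u, hu⟩ : Odd (s * D * N) := by
    have : Odd (s * (s * D * N)) := ⟨2 * p * t - 1, by linear_combination -ht⟩
    exact (Int.odd_mul.mp this).2
  have ha : -((D : ℚ) * N) = 1 + 4 * (u ^ 2 + u - ((p : ℤ) : ℚ) * ((D * N * t : ℤ) : ℚ)) := by
    have : -((D : ℤ) * N) = 1 + 4 * (u ^ 2 + u - p * (D * N * t)) := by
      linear_combination ((D : ℤ) * N) * ht + (s * D * N + 2 * u + 1) * hu
    exact_mod_cast this
  have hb : (p : ℚ) = ((p : ℤ) : ℚ) := (Int.cast_natCast p).symm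
  have hbasis : ![e₁, e₂, e₃, e₄] = orderBasis _ _ u p := by
    have huQ : (s : ℚ) * D * N = 2 * u + 1 := by exact_mod_cast hu
    subst he₁ he₂ he₃ he₄
    ext k : 1
    fin_cases k <;> simp [orderBasis, huQ]
  have hrange : ({e₁, e₂, e₃, e₄} : Set _) = Set.range (orderBasis _ _ u p) := by
    rw [← hbasis]
    simp only [Matrix.range_cons, Matrix.range_empty, Set.union_empty, Set.singleton_union]
  rw [hrange, hbasis]
  exact ⟨subset_span ⟨0, rfl⟩, fun x hx y hy => mul_mem_span_range_orderBasis hp0 ha hb hx hy,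
    linearIndependent_orderBasis hp0⟩

/-- Let `B = (−DN, p / ℚ)` be the quaternion algebra with `I² = −DN`, `J² = p`, `IJ = −JI`,
where `DN ≡ 3 (mod 4)`, `p` is an odd prime with `p ∤ DN`, `s` is an odd integer with
`s²DN + 1 ≡ 0 (mod 4p)`, and `t = (s²DN + 1)/(4p) ∈ ℤ`.  With
`e₁ = 1`, `e₂ = (1 + I)/2`, `e₃ = J`, `e₄ = (sDN·J + IJ)/(2p)`, the ℤ-submodule
`𝒪 = ℤe₁ + ℤe₂ + ℤe₃ + ℤe₄` of `B` contains `1`, is closed under multiplication, and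
`e₁, e₂, e₃, e₄` are linearly independent over `ℚ`; hence `𝒪` is an order of `B`. -/
theorem stmt5 (D N p : ℕ) (hD : 0 < D) (hN : 0 < N)
    (hDN4 : (D * N) % 4 = 3) (hp : p.Prime) (hpodd : p ≠ 2) (hpDN : ¬ (p ∣ D * N))
    (s t : ℤ) (hs : Odd s) (ht : 4 * (p : ℤ) * t = s ^ 2 * D * N + 1)
    (e₁ e₂ e₃ e₄ : ℍ[ℚ, -((D:ℚ)*N), (p:ℚ)])
    (he₁ : e₁ = 1)
    (he₂ : e₂ = ⟨1/2, 1/2, 0, 0⟩)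
    (he₃ : e₃ = ⟨0, 0, 1, 0⟩)
    (he₄ : e₄ = ⟨0, 0, (s:ℚ)*D*N/(2*p), 1/(2*p)⟩) :
    (1 : ℍ[ℚ, -((D:ℚ)*N), (p:ℚ)]) ∈ Submodule.span ℤ ({e₁, e₂, e₃, e₄} : Set _) ∧
    (∀ x ∈ Submodule.span ℤ ({e₁, e₂, e₃, e₄} : Set _),
      ∀ y ∈ Submodule.span ℤ ({e₁, e₂, e₃, e₄} : Set _),
        x * y ∈ Submodule.span ℤ ({e₁, e₂, e₃, e₄} : Set _)) ∧
    LinearIndependent ℚ ![e₁, e₂, e₃, e₄] :=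
  stmt5_general D N p hp s t ht e₁ e₂ e₃ e₄ he₁ he₂ he₃ he₄
end

section
/- Set α₁ = e₃ − ((p−1)/2)e₄, α₂ = −sDN·1 − e₄, α₃ = 1, α₄ = e₂ in B and μ = I (so μ⁻¹ = −I/(DN)). Then α₁, α₂, α₃, α₄ form a symplectic basis with respect to μ: the 4×4 matrix with (i, j) entry tr(μ⁻¹ αᵢ ᾱⱼ) equals the standard symplectic matrix [[0₂, 1₂], [−1₂, 0₂]]. -/
/-!
Multiplying by `μ⁻¹ = c·I` turns the trace pairing `tr(μ⁻¹ x ȳ)` into `2·c·a` times the alternating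
form `x₂y₁ − x₁y₂ + b(x₃y₄ − x₄y₃)` in the coordinates of `ℍ[a, b]`. Here `c·a = 1`, so the Gram
matrix is read off from the coordinates of the `αᵢ`; e.g. the `e₄`-contributions to the pairing of
`α₁` and `α₂` cancel.
-/

open Quaternion

namespace QuaternionAlgebra

theorem re_mk_imI_mul_mul_star {R : Type*} [CommRing R] {a b : R} (c : R) (x y : ℍ[R, a, b]) :
    ((⟨0, c, 0, 0⟩ : ℍ[R, a, b]) * x * star y).re
      = c * a * (x.imI * y.re - x.re * y.imI + b * (x.imJ * y.imK - x.imK * y.imJ)) := by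
  obtain ⟨x₁, x₂, x₃, x₄⟩ := x
  obtain ⟨y₁, y₂, y₃, y₄⟩ := y
  simp only [star_mk, mk_mul_mk]
  ring

end QuaternionAlgebra

theorem stmt7_general (D N p : ℕ) (hD : 0 < D) (hN : 0 < N)
    (hp : p.Prime) (s : ℤ)
    (e₂ e₃ e₄ μinv : ℍ[ℚ, -((D:ℚ)*N), (p:ℚ)])
    (he₂ : e₂ = ⟨1/2, 0, 1/2, 0⟩)
    (he₃ : e₃ = ⟨0, 1/2, 0, 1/2⟩)
    (he₄ : e₄ = ⟨0, 0, (s:ℚ)*D*N/p, 1/p⟩)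
    (hμinv : μinv = ⟨0, -1/((D:ℚ)*N), 0, 0⟩)
    (α : Fin 4 → ℍ[ℚ, -((D:ℚ)*N), (p:ℚ)])
    (hα : α = ![e₃ - (((p:ℚ) - 1)/2) • e₄, (-(s:ℚ)*D*N) • 1 - e₄, 1, e₂]) :
    Matrix.of (fun i j => qtr (μinv * α i * star (α j)))
      = !![0, 0, 1, 0; 0, 0, 0, 1; -1, 0, 0, 0; 0, -1, 0, 0] := by
  have hp0 : (p:ℚ) ≠ 0 := by exact_mod_cast hp.ne_zero
  have hμ : -1 / ((D:ℚ) * N) * -((D:ℚ) * N) = 1 := by field_simp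
  set q : ℚ := ((p:ℚ) - 1) / 2
  have hα_coords : α = ![⟨0, 1/2, -(q * (s * D * N / p)), 1/2 - q / p⟩,
      ⟨-(s * D * N), 0, -(s * D * N / p), -(1 / p)⟩, ⟨1, 0, 0, 0⟩, ⟨1/2, 0, 1/2, 0⟩] := by
    subst hα he₂ he₃ he₄
    ext i : 1
    fin_cases i <;> ext <;> simp [div_eq_mul_inv]
  ext i j
  rw [Matrix.of_apply, qtr, hμinv, QuaternionAlgebra.re_mk_imI_mul_mul_star, hμ, one_mul, hα_coords]
  fin_cases i <;> fin_cases j <;>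
    simp only [Fin.zero_eta, Fin.mk_one, Fin.reduceFinMk, Fin.isValue, Matrix.cons_val,
      Matrix.of_apply] <;>
    field_simp <;> ring

/-- In the primitive case (`p ≡ 1 (mod 4)` prime, `p ∤ 2DN`, `s` even, `pt = s²DN + 1`),
setting `α₁ = e₃ − ((p−1)/2)e₄`, `α₂ = −sDN·1 − e₄`, `α₃ = 1`, `α₄ = e₂` and `μ = I`
(so `μ⁻¹ = −I/(DN)`), the `4×4` matrix with `(i,j)` entry `tr(μ⁻¹ αᵢ ᾱⱼ)` equals the
standard symplectic matrix `[[0₂, 1₂], [−1₂, 0₂]]`, i.e. `α₁, α₂, α₃, α₄` form a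
symplectic basis with respect to `μ`. -/
theorem stmt7 (D N p : ℕ) (hD : 0 < D) (hN : 0 < N)
    (hp : p.Prime) (hp4 : p % 4 = 1) (hpDN : ¬ (p ∣ 2 * D * N))
    (s t : ℤ) (hs : Even s) (ht : (p : ℤ) * t = s ^ 2 * D * N + 1)
    (e₁ e₂ e₃ e₄ μinv : ℍ[ℚ, -((D:ℚ)*N), (p:ℚ)])
    (he₁ : e₁ = 1)
    (he₂ : e₂ = ⟨1/2, 0, 1/2, 0⟩)
    (he₃ : e₃ = ⟨0, 1/2, 0, 1/2⟩)
    (he₄ : e₄ = ⟨0, 0, (s:ℚ)*D*N/p, 1/p⟩)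
    (hμinv : μinv = ⟨0, -1/((D:ℚ)*N), 0, 0⟩)
    (α : Fin 4 → ℍ[ℚ, -((D:ℚ)*N), (p:ℚ)])
    (hα : α = ![e₃ - (((p:ℚ) - 1)/2) • e₄, (-(s:ℚ)*D*N) • 1 - e₄, 1, e₂]) :
    Matrix.of (fun i j => qtr (μinv * α i * star (α j)))
      = !![0, 0, 1, 0; 0, 0, 0, 1; -1, 0, 0, 0; 0, -1, 0, 0] :=
  stmt7_general D N p hD hN hp s e₂ e₃ e₄ μinv he₂ he₃ he₄ hμinv α hα
end

section
/- Let D, N, p be positive integers and s an integer. For every z in the complex upper half-plane (Im z > 0), the matrix τ_z defined by the case-1 period formulas is symmetric with positive definite imaginary part, i.e., τ_z lies in the Siegel upper half-space ℍ₂. -/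
/-!
Each `τᵢ` is `(aᵢ + bᵢ z + cᵢ z²) / (p z)` with real `aᵢ, bᵢ, cᵢ`, so
`Im τᵢ = (cᵢ - aᵢ / |z|²) Im z / p`. Reading off the coefficients gives
`Im τ_z = Bᵀ diag(DN Im z / p, Im z / (p |z|²)) B` with `B` of rows `(ε, -1)` and `(ε̄, -1)`,
and `B` is invertible because `ε - ε̄ = √p ≠ 0`.
-/

open Matrix

lemma Complex.im_quadratic_div_ofReal_mul (a b c d : ℝ) (z : ℂ) :
    (((a : ℂ) + b * z + c * z ^ 2) / (d * z)).im = (c - a / normSq z) * z.im / d := by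
  rcases eq_or_ne z 0 with rfl | hz
  · simp
  rw [show ((a : ℂ) + b * z + c * z ^ 2) / (d * z) = (a * z⁻¹ + b + c * z) / d by field_simp]
  simp [Complex.div_ofReal_im, Complex.inv_im]
  ring

lemma Matrix.posDef_transpose_mul_diagonal_mul {n : Type*} [Fintype n] [DecidableEq n]
    {B : Matrix n n ℝ} (hB : IsUnit B) {d : n → ℝ} (hd : ∀ i, 0 < d i) :
    (Bᵀ * diagonal d * B).PosDef :=
  (IsUnit.posDef_star_left_conjugate_iff hB).mpr (PosDef.diagonal hd)

noncomputable def periodMatrix (D N p : ℕ) (s : ℤ) (z ε εbar : ℂ) :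
    Matrix (Fin 2) (Fin 2) ℂ :=
  let τ₂ := (εbar - ((p:ℂ) - 1) * s * D * N * z - (D:ℂ) * N * ε * z ^ 2) / ((p:ℂ) * z)
  !![(-εbar ^ 2 + ((p:ℂ) - 1) * s * D * N * z / 2 + (D:ℂ) * N * ε ^ 2 * z ^ 2)
        / ((p:ℂ) * z), τ₂;
    τ₂, (-1 - 2 * (s:ℂ) * D * N * z + (D:ℂ) * N * z ^ 2) / ((p:ℂ) * z)]

lemma map_im_periodMatrix (D N p : ℕ) (s : ℤ) (z : ℂ) (e ebar : ℝ) :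
    (periodMatrix D N p s z e ebar).map Complex.im =
      !![e, -1; ebar, -1]ᵀ * diagonal ![D * N * z.im / p, z.im / (p * Complex.normSq z)] *
        !![e, -1; ebar, -1] := by
  have im₁ := Complex.im_quadratic_div_ofReal_mul (-ebar ^ 2) ((p - 1) * s * D * N / 2)
    (D * N * e ^ 2) p z
  have im₂ := Complex.im_quadratic_div_ofReal_mul ebar (-(p - 1) * s * D * N) (-(D * N * e)) p z
  have im₃ := Complex.im_quadratic_div_ofReal_mul (-1) (-2 * s * D * N) (D * N) p z
  push_cast at im₁ im₂ im₃
  ext i j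
  fin_cases i <;> fin_cases j <;> simp [periodMatrix, mul_apply, Fin.sum_univ_two]
  · convert im₁ using 2 <;> ring
  · convert im₂ using 2 <;> ring
  · convert im₂ using 2 <;> ring
  · convert im₃ using 2 <;> ring

/-- Let `D, N, p` be positive integers and `s` an integer.  For `z` in the complex upper
half-plane, the matrix `τ_z` defined by the case-1 period formulas (with
`ε = (1+√p)/2`, `ε̄ = (1−√p)/2`):
`τ₁ = (−ε̄² + (p−1)sDNz/2 + DNε²z²)/(pz)`, `τ₂ = (ε̄ − (p−1)sDNz − DNεz²)/(pz)`,
`τ₃ = (−1 − 2sDNz + DNz²)/(pz)` is symmetric with positive definite imaginary part,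
i.e. `τ_z` lies in the Siegel upper half-space `ℍ₂`. -/
theorem stmt10 (D N p : ℕ) (hD : 0 < D) (hN : 0 < N) (hp : 0 < p) (s : ℤ)
    (z : ℂ) (hz : 0 < z.im)
    (ε εbar : ℂ)
    (hε : ε = (1 + (Real.sqrt p : ℂ)) / 2)
    (hεbar : εbar = (1 - (Real.sqrt p : ℂ)) / 2)
    (τ₁ τ₂ τ₃ : ℂ)
    (h₁ : τ₁ = (-εbar ^ 2 + ((p:ℂ) - 1) * s * D * N * z / 2 + (D:ℂ) * N * ε ^ 2 * z ^ 2)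
      / ((p:ℂ) * z))
    (h₂ : τ₂ = (εbar - ((p:ℂ) - 1) * s * D * N * z - (D:ℂ) * N * ε * z ^ 2) / ((p:ℂ) * z))
    (h₃ : τ₃ = (-1 - 2 * (s:ℂ) * D * N * z + (D:ℂ) * N * z ^ 2) / ((p:ℂ) * z)) :
    (!![τ₁, τ₂; τ₂, τ₃] : Matrix (Fin 2) (Fin 2) ℂ).IsSymm ∧
    ((!![τ₁, τ₂; τ₂, τ₃] : Matrix (Fin 2) (Fin 2) ℂ).map Complex.im).PosDef := by
  refine ⟨IsSymm.ext fun i j => by fin_cases i <;> fin_cases j <;> rfl, ?_⟩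
  have hτ : !![τ₁, τ₂; τ₂, τ₃] =
      periodMatrix D N p s z ((1 + √p) / 2 : ℝ) ((1 - √p) / 2 : ℝ) := by
    subst_vars; push_cast; rfl
  have hB : IsUnit !![(1 + √p) / 2, -1; (1 - √p) / 2, -1] := by
    rw [isUnit_iff_isUnit_det, det_fin_two_of, isUnit_iff_ne_zero]
    nlinarith [Real.sqrt_pos.mpr (show (0 : ℝ) < p by exact_mod_cast hp)]
  have hnormSq : 0 < Complex.normSq z := Complex.normSq_pos.mpr fun h => by simp [h] at hz
  rw [hτ, map_im_periodMatrix]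
  refine posDef_transpose_mul_diagonal_mul hB fun i => ?_
  fin_cases i <;> simp <;> positivity
end

section
/- Set β₁ = J, β₂ = I, β₃ = (sDNJ + IJ)/(2p) in B. Then for all integers b₁, b₂, b₃, one has −nr(b₁β₁ + b₂β₂ + b₃β₃) = pb₁² + DN(sb₁b₃ − b₂² + tb₃²). In particular, setting d = −nr(b₁β₁ + b₂β₂ + b₃β₃), d is an integer and pb₁² ≡ d (mod DN). -/
/-!
Write `b₁β₁ + b₂β₂ + b₃β₃ = b₂I + (b₁ + b₃sDN/(2p))J + (b₃/(2p))IJ`. In the reduced norm the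
`J`- and `IJ`-coordinates contribute `p(b₁ + b₃sDN/(2p))² + DNp(b₃/(2p))²`, whose `b₃²`-part is
`DN b₃² (s²DN + 1)/(4p) = DN t b₃²`; so `−nr` is the integral form `pb₁² + DN(sb₁b₃ − b₂² + tb₃²)`,
which visibly differs from `pb₁²` by a multiple of `DN`.
-/

open Quaternion

theorem neg_norm_form_eq_of_four_mul_eq {K : Type*} [Field K] {m p s t : K} (h2p : 2 * p ≠ 0)
    (ht : 4 * p * t = s ^ 2 * m + 1) (b₁ b₂ b₃ : K) :
    -(m * b₂ ^ 2 - p * (b₁ + b₃ * (s * m / (2 * p))) ^ 2 - m * p * (b₃ * (1 / (2 * p))) ^ 2)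
      = p * b₁ ^ 2 + m * (s * b₁ * b₃ - b₂ ^ 2 + t * b₃ ^ 2) := by
  have hp : p ≠ 0 := right_ne_zero_of_mul h2p
  have h2 : (2 : K) ≠ 0 := left_ne_zero_of_mul h2p
  field_simp
  linear_combination (-m * b₃ ^ 2) * ht

theorem qnr_mk (D N p : ℕ) (x y z w : ℚ) :
    qnr D N p ⟨x, y, z, w⟩ = x ^ 2 + D * N * y ^ 2 - p * z ^ 2 - D * N * p * w ^ 2 :=
  rfl

theorem stmt16_general (D N p : ℕ) (hp : p.Prime)
    (s t : ℤ) (ht : 4 * (p : ℤ) * t = s ^ 2 * D * N + 1)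
    (β₁ β₂ β₃ : ℍ[ℚ, -((D:ℚ)*N), (p:ℚ)])
    (hβ₁ : β₁ = ⟨0, 0, 1, 0⟩)
    (hβ₂ : β₂ = ⟨0, 1, 0, 0⟩)
    (hβ₃ : β₃ = ⟨0, 0, (s:ℚ)*D*N/(2*p), 1/(2*p)⟩) :
    ∀ b₁ b₂ b₃ : ℤ,
      -(qnr D N p (b₁ • β₁ + b₂ • β₂ + b₃ • β₃))
        = (p:ℚ) * b₁ ^ 2 + (D:ℚ) * N * ((s:ℚ) * b₁ * b₃ - (b₂:ℚ) ^ 2 + (t:ℚ) * b₃ ^ 2) ∧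
      ∃ d : ℤ,
        (d : ℚ) = -(qnr D N p (b₁ • β₁ + b₂ • β₂ + b₃ • β₃)) ∧
        (p : ℤ) * b₁ ^ 2 ≡ d [ZMOD ((D : ℤ) * N)] := by
  intro b₁ b₂ b₃
  have h2p : 2 * (p : ℚ) ≠ 0 := mul_ne_zero two_ne_zero (Nat.cast_ne_zero.mpr hp.ne_zero)
  have htℚ : 4 * (p : ℚ) * t = s ^ 2 * (D * N) + 1 := by
    rw [← mul_assoc]; exact_mod_cast ht
  have hnorm : -(qnr D N p (b₁ • β₁ + b₂ • β₂ + b₃ • β₃))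
      = (p:ℚ) * b₁ ^ 2 + (D:ℚ) * N * ((s:ℚ) * b₁ * b₃ - (b₂:ℚ) ^ 2 + (t:ℚ) * b₃ ^ 2) := by
    subst hβ₁ hβ₂ hβ₃
    simp only [QuaternionAlgebra.smul_mk, QuaternionAlgebra.mk_add_mk, zsmul_eq_mul, qnr_mk]
    simpa [← mul_assoc] using neg_norm_form_eq_of_four_mul_eq h2p htℚ (b₁ : ℚ) b₂ b₃
  refine ⟨hnorm, p * b₁ ^ 2 + D * N * (s * b₁ * b₃ - b₂ ^ 2 + t * b₃ ^ 2), ?_, ?_⟩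
  · rw [hnorm]; push_cast; ring
  · exact Int.modEq_add_fac_self.symm

/-- In the case `Q = 4Q′` (`DN ≡ 3 (mod 4)`, `p` an odd prime with `p ∤ DN`, `s` odd,
`4pt = s²DN + 1`), set `β₁ = J`, `β₂ = I`, `β₃ = (sDN·J + IJ)/(2p)`.  Then for all
integers `b₁, b₂, b₃` one has `−nr(b₁β₁ + b₂β₂ + b₃β₃) = pb₁² + DN(sb₁b₃ − b₂² + tb₃²)`;
in particular `d = −nr(b₁β₁ + b₂β₂ + b₃β₃)` is an integer and `pb₁² ≡ d (mod DN)`. -/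
theorem stmt16 (D N p : ℕ) (hD : 0 < D) (hN : 0 < N)
    (hDN4 : (D * N) % 4 = 3) (hp : p.Prime) (hpodd : p ≠ 2) (hpDN : ¬ (p ∣ D * N))
    (s t : ℤ) (hs : Odd s) (ht : 4 * (p : ℤ) * t = s ^ 2 * D * N + 1)
    (β₁ β₂ β₃ : ℍ[ℚ, -((D:ℚ)*N), (p:ℚ)])
    (hβ₁ : β₁ = ⟨0, 0, 1, 0⟩)
    (hβ₂ : β₂ = ⟨0, 1, 0, 0⟩)
    (hβ₃ : β₃ = ⟨0, 0, (s:ℚ)*D*N/(2*p), 1/(2*p)⟩) :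
    ∀ b₁ b₂ b₃ : ℤ,
      -(qnr D N p (b₁ • β₁ + b₂ • β₂ + b₃ • β₃))
        = (p:ℚ) * b₁ ^ 2 + (D:ℚ) * N * ((s:ℚ) * b₁ * b₃ - (b₂:ℚ) ^ 2 + (t:ℚ) * b₃ ^ 2) ∧
      ∃ d : ℤ,
        (d : ℚ) = -(qnr D N p (b₁ • β₁ + b₂ • β₂ + b₃ • β₃)) ∧
        (p : ℤ) * b₁ ^ 2 ≡ d [ZMOD ((D : ℤ) * N)] :=
  stmt16_general D N p hp s t ht β₁ β₂ β₃ hβ₁ hβ₂ hβ₃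
end

section
/- Set β₁ = J, β₂ = (I + IJ)/2, β₃ = (sDNJ + IJ)/p in B. Then for all integers b₁, b₂, b₃, one has −nr(b₁β₁ + b₂β₂ + b₃β₃) = pb₁² + 2sDNb₁b₃ + tDNb₃² + DNb₂b₃ + DN(p−1)b₂²/4. In particular, if b₂ and b₃ are even, then d = −nr(b₁β₁ + b₂β₂ + b₃β₃) is an integer satisfying pb₁² ≡ d (mod 4DN). -/
open Quaternion

def latticeForm (D N p : ℕ) (s t b₁ b₂ b₃ : ℤ) : ℚ :=
  (p:ℚ) * b₁ ^ 2 + 2 * (s:ℚ) * D * N * b₁ * b₃ + (t:ℚ) * D * N * b₃ ^ 2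
    + (D:ℚ) * N * b₂ * b₃ + (D:ℚ) * N * ((p:ℚ) - 1) * (b₂:ℚ) ^ 2 / 4

theorem neg_qnr_eq_latticeForm {D N p : ℕ} (hp : (p:ℚ) ≠ 0) {s t : ℤ}
    (ht : (p : ℤ) * t = s ^ 2 * D * N + 1) (b₁ b₂ b₃ : ℤ) :
    -qnr D N p (b₁ • (⟨0, 0, 1, 0⟩ : ℍ[ℚ, -((D:ℚ)*N), (p:ℚ)])
        + b₂ • ⟨0, 1/2, 0, 1/2⟩ + b₃ • ⟨0, 0, (s:ℚ)*D*N/p, 1/p⟩)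
      = latticeForm D N p s t b₁ b₂ b₃ := by
  have htQ : (p:ℚ) * t = (s:ℚ) ^ 2 * D * N + 1 := by exact_mod_cast ht
  simp only [qnr, latticeForm, QuaternionAlgebra.smul_mk, QuaternionAlgebra.mk_add_mk,
    zsmul_eq_mul]
  field_simp
  -- the `b₃²` coefficient `(s²DN + 1)DN/p` of the expanded norm is `tDN`
  linear_combination (-16 * (D:ℚ) * N * b₃ ^ 2) * htQ

theorem exists_int_eq_latticeForm_modEq {D N p : ℕ} (hp4 : p % 4 = 1) (s t b₁ : ℤ) {b₂ b₃ : ℤ}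
    (hb₂ : Even b₂) (hb₃ : Even b₃) :
    ∃ d : ℤ, (d : ℚ) = latticeForm D N p s t b₁ b₂ b₃ ∧
      (p : ℤ) * b₁ ^ 2 ≡ d [ZMOD (4 * (D : ℤ) * N)] := by
  obtain ⟨c₂, rfl⟩ := hb₂
  obtain ⟨c₃, rfl⟩ := hb₃
  obtain ⟨k, hk⟩ : (4:ℤ) ∣ (p:ℤ) - 1 := by omega
  have hkQ : (p:ℚ) - 1 = 4 * k := by exact_mod_cast hk
  refine ⟨p * b₁ ^ 2 + 4 * D * N * (s * b₁ * c₃ + t * c₃ ^ 2 + c₂ * c₃ + k * c₂ ^ 2), ?_,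
    Int.modEq_iff_dvd.mpr ⟨s * b₁ * c₃ + t * c₃ ^ 2 + c₂ * c₃ + k * c₂ ^ 2, by ring⟩⟩
  rw [latticeForm, hkQ]
  push_cast
  ring

theorem stmt17_general (D N p : ℕ)
    (hp : p.Prime) (hp4 : p % 4 = 1)
    (s t : ℤ) (ht : (p : ℤ) * t = s ^ 2 * D * N + 1)
    (β₁ β₂ β₃ : ℍ[ℚ, -((D:ℚ)*N), (p:ℚ)])
    (hβ₁ : β₁ = ⟨0, 0, 1, 0⟩)
    (hβ₂ : β₂ = ⟨0, 1/2, 0, 1/2⟩)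
    (hβ₃ : β₃ = ⟨0, 0, (s:ℚ)*D*N/p, 1/p⟩) :
    ∀ b₁ b₂ b₃ : ℤ,
      (-(qnr D N p (b₁ • β₁ + b₂ • β₂ + b₃ • β₃))
        = (p:ℚ) * b₁ ^ 2 + 2 * (s:ℚ) * D * N * b₁ * b₃ + (t:ℚ) * D * N * b₃ ^ 2
          + (D:ℚ) * N * b₂ * b₃ + (D:ℚ) * N * ((p:ℚ) - 1) * (b₂:ℚ) ^ 2 / 4) ∧
      (Even b₂ → Even b₃ →
        ∃ d : ℤ,
          (d : ℚ) = -(qnr D N p (b₁ • β₁ + b₂ • β₂ + b₃ • β₃)) ∧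
          (p : ℤ) * b₁ ^ 2 ≡ d [ZMOD (4 * (D : ℤ) * N)]) := by
  intro b₁ b₂ b₃
  subst hβ₁ hβ₂ hβ₃
  rw [neg_qnr_eq_latticeForm (Nat.cast_ne_zero.mpr hp.ne_zero) ht]
  exact ⟨rfl, exists_int_eq_latticeForm_modEq hp4 s t b₁⟩

/-- In the primitive case (`p ≡ 1 (mod 4)` prime, `p ∤ 2DN`, `s` even, `pt = s²DN + 1`),
set `β₁ = J`, `β₂ = (I + IJ)/2`, `β₃ = (sDN·J + IJ)/p`.  Then for all integers
`b₁, b₂, b₃` one has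
`−nr(b₁β₁ + b₂β₂ + b₃β₃) = pb₁² + 2sDNb₁b₃ + tDNb₃² + DNb₂b₃ + DN(p−1)b₂²/4`;
in particular, if `b₂` and `b₃` are even, then `d = −nr(b₁β₁ + b₂β₂ + b₃β₃)` is an
integer satisfying `pb₁² ≡ d (mod 4DN)`. -/
theorem stmt17 (D N p : ℕ) (hD : 0 < D) (hN : 0 < N)
    (hp : p.Prime) (hp4 : p % 4 = 1) (hpDN : ¬ (p ∣ 2 * D * N))
    (s t : ℤ) (hs : Even s) (ht : (p : ℤ) * t = s ^ 2 * D * N + 1)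
    (β₁ β₂ β₃ : ℍ[ℚ, -((D:ℚ)*N), (p:ℚ)])
    (hβ₁ : β₁ = ⟨0, 0, 1, 0⟩)
    (hβ₂ : β₂ = ⟨0, 1/2, 0, 1/2⟩)
    (hβ₃ : β₃ = ⟨0, 0, (s:ℚ)*D*N/p, 1/p⟩) :
    ∀ b₁ b₂ b₃ : ℤ,
      (-(qnr D N p (b₁ • β₁ + b₂ • β₂ + b₃ • β₃))
        = (p:ℚ) * b₁ ^ 2 + 2 * (s:ℚ) * D * N * b₁ * b₃ + (t:ℚ) * D * N * b₃ ^ 2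
          + (D:ℚ) * N * b₂ * b₃ + (D:ℚ) * N * ((p:ℚ) - 1) * (b₂:ℚ) ^ 2 / 4) ∧
      (Even b₂ → Even b₃ →
        ∃ d : ℤ,
          (d : ℚ) = -(qnr D N p (b₁ • β₁ + b₂ • β₂ + b₃ • β₃)) ∧
          (p : ℤ) * b₁ ^ 2 ≡ d [ZMOD (4 * (D : ℤ) * N)]) :=
  stmt17_general D N p hp hp4 s t ht β₁ β₂ β₃ hβ₁ hβ₂ hβ₃
end

section
/- Let p, s, t, D, N be integers with DN ≠ 0 and 4pt = s²DN + 1. Let b₁, b₂, b₃, b₁′, b₂′, b₃′ be integers such that b₁, b₃, b₁′, b₃′ are even, b₁ ≡ b₁′ (mod DN), and pb₁² + DN(sb₁b₃ − b₂² + tb₃²) = pb₁′² + DN(sb₁′b₃′ − b₂′² + tb₃′²). Define A = [[4p, 2sDN, −b₃], [2sDN, 4tDN, b₁], [−b₃, b₁, b₂²]] and A′ = [[4p, 2sDN, −b₃′], [2sDN, 4tDN, b₁′], [−b₃′, b₁′, b₂′²]]. Then u = t(b₃ − b₃′) + (s/2)(b₁ − b₁′) and v = −(s/2)(b₃ − b₃′)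 − (p/(DN))(b₁ − b₁′) are integers, and A′ = U A Uᵗ where U = [[1, 0, 0], [0, 1, 0], [u, v, 1]]. In particular A and A′ are congruent over ℤ via a determinant-1 integer matrix, so the corresponding lattices of singular relations are isomorphic. -/
/-!
Write `G = [[4p, 2sDN], [2sDN, 4tDN]]` for the common upper-left block of `A` and `A′`.
Conjugating by the shear `U` keeps `G`, moves the last column `(-b₃, b₁)` to
`G (u, v)ᵀ + (-b₃, b₁)`, and moves the corner `b₂²` to `b₂² + u (-b₃ - b₃′) + v (b₁ + b₁′)`
once the column is right. Since `det G = 4DN (4pt - s²DN) = 4DN`, the column condition has the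
unique rational solution `(u, v) = G⁻¹ (b₃ - b₃′, b₁′ - b₁)` with `G⁻¹ = [[t, -s/2], [-s/2, p/DN]]`,
which is integral by the parity and congruence hypotheses. Multiplied by `DN`, the corner
condition is then exactly the hypothesis that the two norms agree.
-/

open Matrix in
theorem shear_mul_mul_transpose_eq {R : Type*} [CommRing R] {a b c x y z x' y' z' : R}
    (u v : R) (hx : a * u + b * v + x = x') (hy : b * u + c * v + y = y')
    (hz : z + u * (x + x') + v * (y + y') = z') :
    !![1, 0, 0; 0, 1, 0; u, v, 1] * !![a, b, x; b, c, y; x, y, z]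
        * (!![1, 0, 0; 0, 1, 0; u, v, 1])ᵀ = !![a, b, x'; b, c, y'; x', y', z'] := by
  subst hx hy hz
  ext i j
  fin_cases i <;> fin_cases j <;> simp [mul_apply, Fin.sum_univ_succ] <;> ring

section GramSystem

variable {p s t D N : ℤ}

theorem exists_int_solution_of_even_of_dvd (h : 4 * p * t = s ^ 2 * D * N + 1) {δ₁ δ₃ : ℤ}
    (h₁ : Even δ₁) (h₃ : Even δ₃) (hDN : D * N ∣ δ₁) :
    ∃ u v : ℤ, 4 * p * u + 2 * s * D * N * v = δ₃ ∧
      2 * s * D * N * u + 4 * t * D * N * v = -δ₁ := by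
  obtain ⟨a, rfl⟩ := h₁
  obtain ⟨c, rfl⟩ := h₃
  obtain ⟨k, hk⟩ := hDN
  refine ⟨t * (c + c) + s * a, -s * c - p * k, ?_, ?_⟩
  · linear_combination (c + c) * h + 2 * s * p * hk
  · linear_combination (-(a + a)) * h + 4 * t * p * hk

theorem sq_eq_of_norm_eq (hDN : D * N ≠ 0) (h : 4 * p * t = s ^ 2 * D * N + 1)
    {u v b₁ b₂ b₃ b₁' b₂' b₃' : ℤ}
    (e₁ : 4 * p * u + 2 * s * D * N * v = b₃ - b₃')
    (e₂ : 2 * s * D * N * u + 4 * t * D * N * v = -(b₁ - b₁'))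
    (hnorm : p * b₁ ^ 2 + D * N * (s * b₁ * b₃ - b₂ ^ 2 + t * b₃ ^ 2)
      = p * b₁' ^ 2 + D * N * (s * b₁' * b₃' - b₂' ^ 2 + t * b₃' ^ 2)) :
    b₂ ^ 2 + u * (-b₃ + -b₃') + v * (b₁ + b₁') = b₂' ^ 2 := by
  refine mul_left_cancel₀ (mul_ne_zero two_ne_zero hDN) ?_
  linear_combination -2 * hnorm - (D * N * s * (b₁ + b₁') + 2 * D * N * t * (b₃ + b₃')) * e₁
    + (2 * p * (b₁ + b₁') + D * N * s * (b₃ + b₃')) * e₂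
    + 2 * D * N * (u * (b₃ + b₃') - v * (b₁ + b₁')) * h

end GramSystem

theorem linear_system_solution_eq {K : Type*} [Field K] [CharZero K] {p s t D N : K}
    (hDN : D * N ≠ 0) (h : 4 * p * t = s ^ 2 * D * N + 1) {u v δ₁ δ₃ : K}
    (e₁ : 4 * p * u + 2 * s * D * N * v = δ₃)
    (e₂ : 2 * s * D * N * u + 4 * t * D * N * v = -δ₁) :
    u = t * δ₃ + s / 2 * δ₁ ∧ v = -(s / 2) * δ₃ - p / (D * N) * δ₁ := by
  have hp : p / (D * N) * (D * N) = p := div_mul_cancel₀ p hDN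
  constructor
  · linear_combination t * e₁ - s / 2 * e₂ - u * h
  · linear_combination -(s / 2) * e₁ + p / (D * N) * e₂ - (2 * s * u + 4 * t * v) * hp - v * h

/-- Let `p, s, t, D, N` be integers with `DN ≠ 0` and `4pt = s²DN + 1`.  Let
`b₁, b₂, b₃, b₁′, b₂′, b₃′` be integers such that `b₁, b₃, b₁′, b₃′` are even,
`b₁ ≡ b₁′ (mod DN)`, and
`pb₁² + DN(sb₁b₃ − b₂² + tb₃²) = pb₁′² + DN(sb₁′b₃′ − b₂′² + tb₃′²)`.
Then `u = t(b₃ − b₃′) + (s/2)(b₁ − b₁′)` and `v = −(s/2)(b₃ − b₃′) − (p/(DN))(b₁ − b₁′)`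
are integers and, with `U = [[1,0,0],[0,1,0],[u,v,1]]` (a determinant-one integer
matrix), the Gram matrices `A = [[4p, 2sDN, −b₃], [2sDN, 4tDN, b₁], [−b₃, b₁, b₂²]]`
and `A′ = [[4p, 2sDN, −b₃′], [2sDN, 4tDN, b₁′], [−b₃′, b₁′, b₂′²]]` satisfy
`A′ = U A Uᵗ`; in particular the corresponding lattices are isomorphic. -/
theorem stmt18 (p s t D N : ℤ) (hDN : D * N ≠ 0) (h : 4 * p * t = s ^ 2 * D * N + 1)
    (b₁ b₂ b₃ b₁' b₂' b₃' : ℤ)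
    (hb₁ : Even b₁) (hb₃ : Even b₃) (hb₁' : Even b₁') (hb₃' : Even b₃')
    (hcong : b₁ ≡ b₁' [ZMOD D * N])
    (hnorm : p * b₁ ^ 2 + D * N * (s * b₁ * b₃ - b₂ ^ 2 + t * b₃ ^ 2)
      = p * b₁' ^ 2 + D * N * (s * b₁' * b₃' - b₂' ^ 2 + t * b₃' ^ 2)) :
    ∃ u v : ℤ,
      (u : ℚ) = (t : ℚ) * ((b₃ : ℚ) - (b₃' : ℚ)) + ((s : ℚ) / 2) * ((b₁ : ℚ) - (b₁' : ℚ)) ∧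
      (v : ℚ) = -((s : ℚ) / 2) * ((b₃ : ℚ) - (b₃' : ℚ))
        - ((p : ℚ) / ((D : ℚ) * (N : ℚ))) * ((b₁ : ℚ) - (b₁' : ℚ)) ∧
      (!![4*p, 2*s*D*N, -b₃'; 2*s*D*N, 4*t*D*N, b₁'; -b₃', b₁', b₂'^2]
          : Matrix (Fin 3) (Fin 3) ℤ)
        = !![1, 0, 0; 0, 1, 0; u, v, 1]
          * !![4*p, 2*s*D*N, -b₃; 2*s*D*N, 4*t*D*N, b₁; -b₃, b₁, b₂^2]
          * Matrix.transpose (!![1, 0, 0; 0, 1, 0; u, v, 1] : Matrix (Fin 3) (Fin 3) ℤ) := by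
  obtain ⟨u, v, e₁, e₂⟩ := exists_int_solution_of_even_of_dvd h (hb₁.sub hb₁') (hb₃.sub hb₃')
    hcong.symm.dvd
  have hDNq : (D : ℚ) * N ≠ 0 := by exact_mod_cast hDN
  have hq : 4 * p * t = s ^ 2 * D * N + (1 : ℚ) := by exact_mod_cast h
  have e₁q : 4 * p * u + 2 * s * D * N * v = (b₃ - b₃' : ℚ) := by exact_mod_cast e₁
  have e₂q : 2 * s * D * N * u + 4 * t * D * N * v = -(b₁ - b₁' : ℚ) := by exact_mod_cast e₂
  obtain ⟨hu, hv⟩ := linear_system_solution_eq hDNq hq e₁q e₂q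
  refine ⟨u, v, hu, hv, (shear_mul_mul_transpose_eq u v ?_ ?_ ?_).symm⟩
  · linear_combination e₁
  · linear_combination e₂
  · exact sq_eq_of_norm_eq hDN h e₁ e₂ hnorm
end

section
/- Let D, N, p be positive integers, s an integer, and c₁, c₂, c₃ rational numbers with c₁ + c₃√p ≠ 0. Suppose d := −DNc₁² + pc₂² + DNpc₃² is negative, and set z = (c₂√p + i√|d|)/(DN(c₁ + c₃√p)) (a nonzero complex number). Then, with τ₁, τ₂, τ₃ given by the case-2 period formulas at this z, one has −c₁τ₂ + pc₃τ₃ − (c₂ − sDNc₃)/2 = 0. Equivalently, writing b₂ = c₁, b₃ = 2pc₃, b₁ = c₂ − sDNc₃, the matrix τ_z satisfies the singular relation ℓ₃ = (0, −b₂, b₃/2, 0, −b₁/2). -/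
/-!
Clearing denominators, the relation `−c₁τ₂ + pc₃τ₃ − (c₂ − sDNc₃)/2 = 0` becomes the quadratic
equation `DN(c₁ + c₃√p) z² − 2c₂√p z + (c₁ − c₃√p) = 0` (the `s`-terms cancel). Its discriminant
is `4d`, and since `d < 0` one has `(2i√|d|)² = 4d`, so the prescribed `z` is one of its two roots
by the quadratic formula.
-/

section Field

variable {K : Type*} [Field K] [NeZero (2 : K)]

theorem quadratic_eq_zero_of_eq_div {D N p r c₁ c₂ c₃ d u z : K} (hr : r ^ 2 = p)
    (hd : d = -(D * N) * c₁ ^ 2 + p * c₂ ^ 2 + D * N * p * c₃ ^ 2) (hu : u ^ 2 = d)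
    (hne : D * N * (c₁ + c₃ * r) ≠ 0) (hz : z = (c₂ * r + u) / (D * N * (c₁ + c₃ * r))) :
    D * N * (c₁ + c₃ * r) * z ^ 2 - 2 * c₂ * r * z + (c₁ - c₃ * r) = 0 := by
  have hdiscrim :
      discrim (D * N * (c₁ + c₃ * r)) (-2 * c₂ * r) (c₁ - c₃ * r) = (2 * u) * (2 * u) := by
    rw [discrim]
    linear_combination (4 * c₂ ^ 2 + 4 * D * N * c₃ ^ 2) * hr - 4 * hd - 4 * hu
  have hroot : z = (-(-2 * c₂ * r) + 2 * u) / (2 * (D * N * (c₁ + c₃ * r))) := by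
    rw [hz]
    field_simp
  linear_combination ((quadratic_eq_zero_iff hne hdiscrim z).mpr (Or.inl hroot))

theorem singular_relation_of_quadratic_eq_zero {D N p r s c₁ c₂ c₃ z : K} (hr : r ^ 2 = p)
    (hr0 : r ≠ 0) (hz : z ≠ 0)
    (hq : D * N * (c₁ + c₃ * r) * z ^ 2 - 2 * c₂ * r * z + (c₁ - c₃ * r) = 0) :
    -c₁ * (-(D * N * z ^ 2 + 1) / (4 * r * z))
      + p * c₃ * ((D * N * z ^ 2 - 2 * s * D * N * z - 1) / (4 * p * z))
      - (c₂ - s * D * N * c₃) / 2 = 0 := by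
  have h4 : (4 : K) ≠ 0 := by
    simpa [← two_add_two_eq_four, ← two_mul] using two_ne_zero (α := K)
  have hp : p ≠ 0 := hr ▸ pow_ne_zero 2 hr0
  field_simp
  linear_combination 2 * hq

end Field

theorem I_mul_sqrt_abs_sq_of_nonpos {x : ℝ} (hx : x ≤ 0) :
    (Complex.I * (Real.sqrt |x| : ℂ)) ^ 2 = x := by
  rw [mul_pow, Complex.I_sq, ← Complex.ofReal_pow, Real.sq_sqrt (abs_nonneg x), abs_of_nonpos hx]
  push_cast
  ring

theorem stmt19_general (D N p : ℕ) (hD : 0 < D) (hN : 0 < N) (hp : 0 < p) (s : ℤ)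
    (c₁ c₂ c₃ : ℚ) (hne : (c₁ : ℝ) + (c₃ : ℝ) * Real.sqrt p ≠ 0)
    (d : ℚ) (hd : d = -((D:ℚ) * N) * c₁ ^ 2 + (p:ℚ) * c₂ ^ 2 + (D:ℚ) * N * p * c₃ ^ 2)
    (hdneg : d < 0)
    (z : ℂ)
    (hz : z = ((c₂ : ℂ) * (Real.sqrt p : ℂ) + Complex.I * (Real.sqrt |(d : ℝ)| : ℂ))
      / ((D : ℂ) * N * ((c₁ : ℂ) + (c₃ : ℂ) * (Real.sqrt p : ℂ))))
    (τ₂ τ₃ : ℂ)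
    (h₂ : τ₂ = -((D:ℂ) * N * z ^ 2 + 1) / (4 * (Real.sqrt p : ℂ) * z))
    (h₃ : τ₃ = ((D:ℂ) * N * z ^ 2 - 2 * (s:ℂ) * D * N * z - 1) / (4 * (p:ℂ) * z)) :
    -(c₁ : ℂ) * τ₂ + (p : ℂ) * (c₃ : ℂ) * τ₃ - ((c₂ : ℂ) - (s : ℂ) * D * N * (c₃ : ℂ)) / 2
      = 0 := by
  have hp' : (0 : ℝ) < p := by exact_mod_cast hp
  have hd' : (d : ℝ) < 0 := by exact_mod_cast hdneg
  have hr : (Real.sqrt p : ℂ) ^ 2 = p := by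
    rw [← Complex.ofReal_pow, Real.sq_sqrt hp'.le, Complex.ofReal_natCast]
  have hr0 : (Real.sqrt p : ℂ) ≠ 0 := Complex.ofReal_ne_zero.mpr (Real.sqrt_pos.mpr hp').ne'
  have hu : (Complex.I * (Real.sqrt |(d : ℝ)| : ℂ)) ^ 2 = d := by
    rw [I_mul_sqrt_abs_sq_of_nonpos hd'.le, Complex.ofReal_ratCast]
  have hden : (D : ℂ) * N * ((c₁ : ℂ) + (c₃ : ℂ) * (Real.sqrt p : ℂ)) ≠ 0 := by
    have hDN : (D : ℂ) * N ≠ 0 := mul_ne_zero (by exact_mod_cast hD.ne') (by exact_mod_cast hN.ne')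
    refine mul_ne_zero hDN fun h => hne ?_
    simpa using congrArg Complex.re h
  have hz0 : z ≠ 0 := by
    rw [hz]
    refine div_ne_zero (fun h => ?_) hden
    have him := congrArg Complex.im h
    simp only [Complex.add_im, Complex.mul_im, Complex.I_re, Complex.I_im, Complex.ofReal_re,
      Complex.ofReal_im, Complex.ratCast_re, Complex.ratCast_im, Complex.zero_im] at him
    exact (Real.sqrt_pos.mpr (abs_pos.mpr hd'.ne)).ne' (by linarith)
  rw [h₂, h₃]
  exact singular_relation_of_quadratic_eq_zero hr hr0 hz0
    (quadratic_eq_zero_of_eq_div hr (by exact_mod_cast hd) hu hden hz)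

/-- Let `D, N, p` be positive integers, `s` an integer, and `c₁, c₂, c₃` rational numbers
with `c₁ + c₃√p ≠ 0`.  Suppose `d = −DNc₁² + pc₂² + DNpc₃²` is negative, and set
`z = (c₂√p + i√|d|)/(DN(c₁ + c₃√p))`.  Then, with `τ₁, τ₂, τ₃` given by the case-2
period formulas at this `z`, one has `−c₁τ₂ + pc₃τ₃ − (c₂ − sDNc₃)/2 = 0`; equivalently,
writing `b₂ = c₁`, `b₃ = 2pc₃`, `b₁ = c₂ − sDNc₃`, the matrix `τ_z` satisfies the
singular relation `ℓ₃ = (0, −b₂, b₃/2, 0, −b₁/2)`. -/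
theorem stmt19 (D N p : ℕ) (hD : 0 < D) (hN : 0 < N) (hp : 0 < p) (s : ℤ)
    (c₁ c₂ c₃ : ℚ) (hne : (c₁ : ℝ) + (c₃ : ℝ) * Real.sqrt p ≠ 0)
    (d : ℚ) (hd : d = -((D:ℚ) * N) * c₁ ^ 2 + (p:ℚ) * c₂ ^ 2 + (D:ℚ) * N * p * c₃ ^ 2)
    (hdneg : d < 0)
    (z : ℂ)
    (hz : z = ((c₂ : ℂ) * (Real.sqrt p : ℂ) + Complex.I * (Real.sqrt |(d : ℝ)| : ℂ))
      / ((D : ℂ) * N * ((c₁ : ℂ) + (c₃ : ℂ) * (Real.sqrt p : ℂ))))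
    (τ₁ τ₂ τ₃ : ℂ)
    (h₁ : τ₁ = ((D:ℂ) * N * z ^ 2 + 2 * z - 1) / (4 * z))
    (h₂ : τ₂ = -((D:ℂ) * N * z ^ 2 + 1) / (4 * (Real.sqrt p : ℂ) * z))
    (h₃ : τ₃ = ((D:ℂ) * N * z ^ 2 - 2 * (s:ℂ) * D * N * z - 1) / (4 * (p:ℂ) * z)) :
    -(c₁ : ℂ) * τ₂ + (p : ℂ) * (c₃ : ℂ) * τ₃ - ((c₂ : ℂ) - (s : ℂ) * D * N * (c₃ : ℂ)) / 2
      = 0 :=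
  stmt19_general D N p hD hN hp s c₁ c₂ c₃ hne d hd hdneg z hz τ₂ τ₃ h₂ h₃
end
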